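/- Every 4×8 matrix Λ over ℤ/2 that is a (ℤ/2)-characteristic matrix over P₀⁴(8) is equivalent over P₀⁴(8) to one of the three matrices a₁, a₂, a₇. -/

import Mathlib

open Matrix

def V0 : List (Fin 4 → Fin 8) :=
  [![0,1,2,3], ![0,1,2,7], ![0,1,3,4], ![0,1,4,5], ![0,1,5,6], ![0,1,6,7], ![0,2,3,4], ![0,2,4,5], ![0,2,5,6], ![0,2,6,7], ![1,2,3,7], ![1,3,4,6], ![1,3,6,7], ![1,4,5,6], ![2,3,4,7], ![2,4,5,7], ![2,5,6,7], ![3,4,5,6], ![3,4,5,7], ![3,5,6,7]]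
def V0F : Finset (Finset (Fin 8)) :=
  {{0,1,2,3}, {0,1,2,7}, {0,1,3,4}, {0,1,4,5}, {0,1,5,6}, {0,1,6,7}, {0,2,3,4}, {0,2,4,5}, {0,2,5,6}, {0,2,6,7}, {1,2,3,7}, {1,3,4,6}, {1,3,6,7}, {1,4,5,6}, {2,3,4,7}, {2,4,5,7}, {2,5,6,7}, {3,4,5,6}, {3,4,5,7}, {3,5,6,7}}
def a1 : Matrix (Fin 4) (Fin 8) (ZMod 2) :=
  !![1, 0, 0, 0, 1, 0, 0, 1;
    0, 1, 0, 0, 1, 0, 1, 0;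
    0, 0, 1, 0, 1, 1, 1, 0;
    0, 0, 0, 1, 0, 1, 0, 1]
def a2 : Matrix (Fin 4) (Fin 8) (ZMod 2) :=
  !![1, 0, 0, 0, 1, 0, 0, 1;
    0, 1, 0, 0, 1, 0, 1, 0;
    0, 0, 1, 0, 1, 1, 1, 1;
    0, 0, 0, 1, 0, 1, 0, 1]
def a3 : Matrix (Fin 4) (Fin 8) (ZMod 2) :=
  !![1, 0, 0, 0, 0, 0, 1, 1;
    0, 1, 0, 0, 1, 0, 1, 0;
    0, 0, 1, 0, 1, 1, 1, 0;
    0, 0, 0, 1, 0, 1, 0, 1]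
def a4 : Matrix (Fin 4) (Fin 8) (ZMod 2) :=
  !![1, 0, 0, 0, 0, 0, 1, 1;
    0, 1, 0, 0, 1, 0, 1, 0;
    0, 0, 1, 0, 1, 1, 0, 1;
    0, 0, 0, 1, 0, 1, 1, 1]
def a5 : Matrix (Fin 4) (Fin 8) (ZMod 2) :=
  !![1, 0, 0, 0, 0, 0, 1, 1;
    0, 1, 0, 0, 1, 1, 0, 1;
    0, 0, 1, 0, 1, 0, 1, 0;
    0, 0, 0, 1, 0, 1, 1, 1]
def a6 : Matrix (Fin 4) (Fin 8) (ZMod 2) :=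
  !![1, 0, 0, 0, 0, 0, 1, 1;
    0, 1, 0, 0, 1, 1, 1, 1;
    0, 0, 1, 0, 1, 0, 1, 0;
    0, 0, 0, 1, 0, 1, 0, 1]
def a7 : Matrix (Fin 4) (Fin 8) (ZMod 2) :=
  !![1, 0, 0, 0, 0, 1, 1, 1;
    0, 1, 0, 0, 1, 1, 0, 1;
    0, 0, 1, 0, 1, 1, 1, 0;
    0, 0, 0, 1, 1, 0, 1, 1]

/-- The 8×8 permutation matrix of σ over ℤ/2: P_σ e_j = e_(σ j). -/
def permMat (σ : Equiv.Perm (Fin 8)) : Matrix (Fin 8) (Fin 8) (ZMod 2) :=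
  Matrix.of fun i j => if i = σ j then 1 else 0

/-- σ is a combinatorial automorphism of the polytope. -/
def IsAut (σ : Equiv.Perm (Fin 8)) : Prop :=
  V0F.image (fun v => v.image (fun x => σ x)) = V0F

/-- Equivalence of characteristic matrices over the polytope. -/
def MatEquiv (Λ Λ' : Matrix (Fin 4) (Fin 8) (ZMod 2)) : Prop :=
  ∃ (g : Matrix (Fin 4) (Fin 4) (ZMod 2)) (σ : Equiv.Perm (Fin 8)),
    IsUnit g ∧ IsAut σ ∧ Λ' = g * Λ * permMat σ

/-!
Left multiplication by the inverse of the block of `Λ` at the vertex `{0,1,2,3}` brings `Λ` to the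
form `[1 | N]` and keeps it characteristic. The vertex conditions leave exactly seven
possibilities `a₁, …, a₇` for `[1 | N]`; they are found by a search that fixes the columns of `N`
one at a time, which is effective because a vertex whose largest facet is `j` only involves the
columns `≤ j`. Finally `a₃, …, a₆` are carried to `a₁` or `a₂` by explicit automorphisms of the
polytope.
-/

section Determinant

variable {R : Type*} [CommRing R]

/-- Unlike `Matrix.det`, this is evaluated quickly by the kernel. -/
def det4 (M : Matrix (Fin 4) (Fin 4) R) : R :=
  M 0 0 * M 1 1 * M 2 2 * M 3 3 - M 0 0 * M 1 1 * M 2 3 * M 3 2 - M 0 0 * M 1 2 * M 2 1 * M 3 3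
  + M 0 0 * M 1 2 * M 2 3 * M 3 1 + M 0 0 * M 1 3 * M 2 1 * M 3 2 - M 0 0 * M 1 3 * M 2 2 * M 3 1
  - M 0 1 * M 1 0 * M 2 2 * M 3 3 + M 0 1 * M 1 0 * M 2 3 * M 3 2 + M 0 1 * M 1 2 * M 2 0 * M 3 3
  - M 0 1 * M 1 2 * M 2 3 * M 3 0 - M 0 1 * M 1 3 * M 2 0 * M 3 2 + M 0 1 * M 1 3 * M 2 2 * M 3 0
  + M 0 2 * M 1 0 * M 2 1 * M 3 3 - M 0 2 * M 1 0 * M 2 3 * M 3 1 - M 0 2 * M 1 1 * M 2 0 * M 3 3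
  + M 0 2 * M 1 1 * M 2 3 * M 3 0 + M 0 2 * M 1 3 * M 2 0 * M 3 1 - M 0 2 * M 1 3 * M 2 1 * M 3 0
  - M 0 3 * M 1 0 * M 2 1 * M 3 2 + M 0 3 * M 1 0 * M 2 2 * M 3 1 + M 0 3 * M 1 1 * M 2 0 * M 3 2
  - M 0 3 * M 1 1 * M 2 2 * M 3 0 - M 0 3 * M 1 2 * M 2 0 * M 3 1 + M 0 3 * M 1 2 * M 2 1 * M 3 0

theorem det_eq_det4 (M : Matrix (Fin 4) (Fin 4) R) : M.det = det4 M := by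
  simp only [det_succ_row_zero, Nat.reduceAdd, submatrix_apply, Fin.succAbove, submatrix_submatrix,
    Function.comp_apply, det_unique, Fin.default_eq_zero, Fin.reduceSucc, Fin.sum_univ_succ,
    Fin.coe_ofNat_eq_mod, Nat.zero_mod, ↓reduceIte, Finset.univ_unique, Fin.val_succ,
    Fin.val_eq_zero, pow_one, neg_mul, Finset.sum_singleton, Fin.reduceCastSucc, even_two,
    Even.neg_pow, Fin.reduceLT, Fin.lt_one_iff, Fin.reduceEq, det4]
  ring

theorem isUnit_of_isUnit_det4 {M : Matrix (Fin 4) (Fin 4) R} (h : IsUnit (det4 M)) : IsUnit M :=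
  (isUnit_iff_isUnit_det M).2 (det_eq_det4 M ▸ h)

end Determinant

def IsCharacteristic {R : Type*} [CommRing R] {n m : ℕ} (V : List (Fin n → Fin m))
    (Λ : Matrix (Fin n) (Fin m) R) : Prop :=
  ∀ v ∈ V, IsUnit (Λ.submatrix id v).det

namespace IsCharacteristic

variable {R : Type*} [CommRing R] {n m : ℕ} {V : List (Fin n → Fin m)}
  {Λ : Matrix (Fin n) (Fin m) R}

theorem mul_left {g : Matrix (Fin n) (Fin n) R} (hg : IsUnit g) (h : IsCharacteristic V Λ) :
    IsCharacteristic V (g * Λ) := fun v hv => by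
  rw [submatrix_mul _ _ _ id _ Function.bijective_id, submatrix_id_id, det_mul]
  exact ((isUnit_iff_isUnit_det g).1 hg).mul (h v hv)

theorem of_submatrix_eq {V' : List (Fin n → Fin m)} {Λ' : Matrix (Fin n) (Fin m) R}
    (h : IsCharacteristic V Λ) (hV : V' ⊆ V)
    (hΛ : ∀ v ∈ V', Λ'.submatrix id v = Λ.submatrix id v) : IsCharacteristic V' Λ' :=
  fun v hv => hΛ v hv ▸ h v (hV hv)

end IsCharacteristic

/- `List.decidableBAll` is named because instance search would otherwise decide `∀ v ∈ V` by
running through all of `Fin 4 → Fin m`. -/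
instance {R : Type*} [Field R] [DecidableEq R] {m : ℕ} (V : List (Fin 4 → Fin m))
    (Λ : Matrix (Fin 4) (Fin m) R) : Decidable (IsCharacteristic V Λ) :=
  @decidable_of_iff _ _ (by simp only [IsCharacteristic, det_eq_det4, isUnit_iff_ne_zero])
    (List.decidableBAll (fun v => det4 (Λ.submatrix id v) ≠ 0) V)

def normalForm {R : Type*} [CommRing R] {n m : ℕ} (c : Fin m → Fin n → R) :
    Matrix (Fin n) (Fin (n + m)) R :=
  Matrix.of fun i j =>
    if h : (j : ℕ) < n then (1 : Matrix (Fin n) (Fin n) R) i ⟨j, h⟩ else c ⟨j - n, by omega⟩ i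

section NormalForm

variable {R : Type*} [CommRing R] {n m : ℕ}

theorem exists_isUnit_mul_eq_normalForm {Λ : Matrix (Fin n) (Fin (n + m)) R}
    (hΛ : IsUnit (Λ.submatrix id (Fin.castAdd m)).det) :
    ∃ g : Matrix (Fin n) (Fin n) R, IsUnit g ∧ ∃ c : Fin m → Fin n → R, g * Λ = normalForm c := by
  set B : Matrix (Fin n) (Fin n) R := Λ.submatrix id (Fin.castAdd m)
  refine ⟨B⁻¹, isUnit_nonsing_inv_iff.2 ((isUnit_iff_isUnit_det B).2 hΛ),
    fun k i => (B⁻¹ * Λ) i (Fin.natAdd n k), ?_⟩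
  ext i ⟨j, hj⟩
  by_cases hjn : j < n
  · simpa [normalForm, hjn, B, mul_apply] using
      congrFun (congrFun (nonsing_inv_mul B hΛ) i) ⟨j, hjn⟩
  · simp only [normalForm, hjn, Fin.natAdd, of_apply, dite_false]
    exact congrArg _ (Fin.ext (by simp only; omega))

theorem normalForm_apply_congr {c c' : Fin m → Fin n → R} {j : Fin (n + m)}
    (hc : ∀ l : Fin m, n + (l : ℕ) ≤ j → c' l = c l) (i : Fin n) :
    normalForm c' i j = normalForm c i j := by
  simp only [normalForm, of_apply]
  split_ifs with hj
  · rfl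
  · rw [hc _ (by simp only; omega)]

end NormalForm

/-- Each vertex of `V0` lists its facets in increasing order, so these are the vertices whose
largest facet is `j`. -/
def V0Top (j : Fin 8) : List (Fin 4 → Fin 8) := V0.filter (· 3 = j)

theorem V0_le_last : ∀ v ∈ V0, ∀ k, v k ≤ v 3 := by
  simp only [V0, List.forall_mem_cons, List.not_mem_nil, IsEmpty.forall_iff, implies_true]
  decide

theorem IsCharacteristic.normalForm_V0Top {R : Type*} [CommRing R] {c c' : Fin 4 → Fin 4 → R}
    (h : IsCharacteristic V0 (normalForm c)) (j : Fin 8)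
    (hc : ∀ l : Fin 4, 4 + (l : ℕ) ≤ j → c' l = c l) :
    IsCharacteristic (V0Top j) (normalForm c') :=
  h.of_submatrix_eq (List.filter_subset_self _) fun v hv => by
    obtain ⟨hv₀, rfl⟩ : v ∈ V0 ∧ v 3 = j := by simpa [V0Top] using hv
    ext i k
    exact normalForm_apply_congr (fun l hl => hc l (hl.trans (V0_le_last v hv₀ k))) i

set_option synthInstance.maxSize 1000 in
theorem normalForm_mem_of_isCharacteristic_V0Top :
    ∀ c₄ : Fin 4 → ZMod 2, IsCharacteristic (V0Top 4) (normalForm ![c₄, 0, 0, 0]) →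
    ∀ c₅ : Fin 4 → ZMod 2, IsCharacteristic (V0Top 5) (normalForm ![c₄, c₅, 0, 0]) →
    ∀ c₆ : Fin 4 → ZMod 2, IsCharacteristic (V0Top 6) (normalForm ![c₄, c₅, c₆, 0]) →
    ∀ c₇ : Fin 4 → ZMod 2, IsCharacteristic (V0Top 7) (normalForm ![c₄, c₅, c₆, c₇]) →
    normalForm ![c₄, c₅, c₆, c₇] ∈ [a1, a2, a3, a4, a5, a6, a7] := by
  simp only [Fin.forall_fin_succ_pi, Fin.forall_fin_zero_pi]
  decide +kernel

theorem normalForm_mem_of_isCharacteristic {c : Fin 4 → Fin 4 → ZMod 2}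
    (h : IsCharacteristic V0 (normalForm c)) :
    normalForm c ∈ [a1, a2, a3, a4, a5, a6, a7] := by
  have hc : ![c 0, c 1, c 2, c 3] = c := by ext k; fin_cases k <;> rfl
  rw [← hc] at h ⊢
  refine normalForm_mem_of_isCharacteristic_V0Top _ (h.normalForm_V0Top 4 ?_)
    _ (h.normalForm_V0Top 5 ?_) _ (h.normalForm_V0Top 6 ?_) _ (h.normalForm_V0Top 7 ?_)
  all_goals intro l hl; fin_cases l <;> simp_all

theorem permMat_one : permMat 1 = 1 := by
  ext i j
  simp only [permMat, one_apply, of_apply, Equiv.Perm.one_apply]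
  exact if_congr Iff.rfl rfl rfl

theorem permMat_mul (σ τ : Equiv.Perm (Fin 8)) : permMat (σ * τ) = permMat σ * permMat τ := by
  ext i j
  simp only [permMat, Equiv.Perm.coe_mul, Function.comp_apply, of_apply, mul_apply, mul_ite,
    mul_one, mul_zero, Finset.sum_ite_eq', Finset.mem_univ, ↓reduceIte]
  exact if_congr Iff.rfl rfl rfl

instance : DecidablePred IsAut := fun _ => inferInstanceAs (Decidable (_ = _))

theorem isAut_one : IsAut 1 := by
  simp [IsAut]

theorem IsAut.mul {σ τ : Equiv.Perm (Fin 8)} (hσ : IsAut σ) (hτ : IsAut τ) : IsAut (σ * τ) := by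
  have : (fun v : Finset (Fin 8) => v.image fun x => (σ * τ) x) =
      (fun v => v.image fun x => σ x) ∘ fun v => v.image fun x => τ x :=
    funext fun v => by simp only [Function.comp_apply, Finset.image_image]; rfl
  rw [IsAut, this, ← Finset.image_image, hτ, hσ]

theorem MatEquiv.of_isUnit_mul {Λ : Matrix (Fin 4) (Fin 8) (ZMod 2)}
    {g : Matrix (Fin 4) (Fin 4) (ZMod 2)} (hg : IsUnit g) : MatEquiv Λ (g * Λ) :=
  ⟨g, 1, hg, isAut_one, by rw [permMat_one, Matrix.mul_one]⟩

theorem MatEquiv.trans {Λ Λ' Λ'' : Matrix (Fin 4) (Fin 8) (ZMod 2)} :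
    MatEquiv Λ Λ' → MatEquiv Λ' Λ'' → MatEquiv Λ Λ''
  | ⟨g, σ, hg, hσ, h⟩, ⟨g', σ', hg', hσ', h'⟩ =>
    ⟨g' * g, σ * σ', hg'.mul hg, hσ.mul hσ', by simp only [h', h, permMat_mul, Matrix.mul_assoc]⟩

/- In each of the following, `g` is the inverse of the first `4 × 4` block of `aᵢ * permMat σ`. -/

theorem a3_matEquiv_a2 : MatEquiv a3 a2 :=
  ⟨!![0, 1, 1, 0; 0, 0, 0, 1; 1, 1, 0, 1; 0, 1, 0, 0], c[0, 2] * c[1, 7] * c[3, 6] * c[4, 5],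
    isUnit_of_isUnit_det4 (by decide), by decide, by decide⟩

theorem a4_matEquiv_a2 : MatEquiv a4 a2 :=
  ⟨!![1, 0, 0, 1; 1, 0, 0, 0; 1, 0, 1, 1; 0, 1, 1, 1], c[0, 5, 2, 4] * c[1, 6, 7, 3],
    isUnit_of_isUnit_det4 (by decide), by decide, by decide⟩

theorem a5_matEquiv_a1 : MatEquiv a5 a1 :=
  ⟨!![0, 0, 1, 0; 0, 1, 1, 1; 1, 1, 1, 0; 1, 0, 0, 0], c[0, 4, 2, 5] * c[1, 3, 7, 6],
    isUnit_of_isUnit_det4 (by decide), by decide, by decide⟩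

theorem a6_matEquiv_a2 : MatEquiv a6 a2 :=
  ⟨!![0, 0, 1, 0; 0, 1, 1, 1; 1, 1, 1, 0; 1, 0, 0, 0], c[0, 4, 2, 5] * c[1, 3, 7, 6],
    isUnit_of_isUnit_det4 (by decide), by decide, by decide⟩

/-- Every (ℤ/2)-characteristic matrix over P₀⁴(8) is equivalent to a₁, a₂ or a₇. -/
theorem stmt6 (Λ : Matrix (Fin 4) (Fin 8) (ZMod 2))
    (hchar : ∀ v ∈ V0, IsUnit (Λ.submatrix id v).det) :
    MatEquiv Λ a1 ∨ MatEquiv Λ a2 ∨ MatEquiv Λ a7 := by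
  have hΛ : IsCharacteristic V0 Λ := hchar
  obtain ⟨g, hg, c, hgΛ⟩ :=
    exists_isUnit_mul_eq_normalForm (m := 4) (hΛ (Fin.castAdd 4) (by decide))
  have hequiv : MatEquiv Λ (normalForm c) := hgΛ ▸ MatEquiv.of_isUnit_mul hg
  have hmem := normalForm_mem_of_isCharacteristic (hgΛ ▸ hΛ.mul_left hg)
  simp only [List.mem_cons, List.not_mem_nil, or_false] at hmem
  rcases hmem with h | h | h | h | h | h | h <;> rw [h] at hequiv
  · exact Or.inl hequiv
  · exact Or.inr (Or.inl hequiv)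
  · exact Or.inr (Or.inl (hequiv.trans a3_matEquiv_a2))
  · exact Or.inr (Or.inl (hequiv.trans a4_matEquiv_a2))
  · exact Or.inl (hequiv.trans a5_matEquiv_a1)
  · exact Or.inr (Or.inl (hequiv.trans a6_matEquiv_a2))
  · exact Or.inr (Or.inr hequiv)
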